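/- For the iterated map with Ω_i = π/2 − φ_i where φ_{i+1} = q(φ_i) = arctan(tan²(φ_i)), if 3π/8 < φ_i < π/2 then Ω_{i+1} ≤ β·Ω_i, where β = (π/8)^{-1}·(π/2 − arctan(tan²(3π/8))) < 1. -/

import Mathlib

open Real

lemma F_strictMono : StrictMonoOn (fun t : ℝ => 2 * t * (1 + t ^ 2) / (1 + t ^ 4)) (Set.Icc (0:ℝ) 1) := by
  intro a ha b hb hab
  obtain ⟨ha0, ha1⟩ := ha
  obtain ⟨hb0, hb1⟩ := hb
  have hA : (0:ℝ) < 1 + a ^ 4 := by positivity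
  have hB : (0:ℝ) < 1 + b ^ 4 := by positivity
  have hab1 : a * b < 1 := by nlinarith
  have e1 : 0 < (b - a) * (1 - (a*b)^3) := by
    apply mul_pos (by linarith)
    nlinarith [mul_nonneg ha0 hb0, sq_nonneg (a*b)]
  have e2 : 0 ≤ (b^3 - a^3) * (1 - a*b) := by
    apply mul_nonneg _ (by linarith)
    nlinarith [sq_nonneg (a+b), sq_nonneg (a-b)]
  simp only [div_lt_div_iff₀ hA hB]
  nlinarith [e1, e2]

lemma g_hasDeriv {x : ℝ} (hx : x ∈ Set.Ioo (-(π/2)) (π/2)) :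
    HasDerivAt (fun y => arctan (tan y ^ 2))
      (2 * tan x * (1 + tan x ^ 2) / (1 + tan x ^ 4)) x := by
  have hc : 0 < cos x := cos_pos_of_mem_Ioo hx
  have h1 : HasDerivAt tan (1 / cos x ^ 2) x := hasDerivAt_tan hc.ne'
  have h2 : HasDerivAt (fun y => tan y ^ 2) (2 * tan x * (1 / cos x ^ 2)) x := by
    simpa [mul_comm] using h1.fun_pow 2
  have h3 := (hasDerivAt_arctan (tan x ^ 2)).comp x h2
  have hcs : 1 / cos x ^ 2 = 1 + tan x ^ 2 := by
    rw [← inv_one_add_tan_sq hc.ne', one_div, inv_inv]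
  have heq : 2 * tan x * (1 + tan x ^ 2) / (1 + tan x ^ 4)
      = 1 / (1 + (tan x ^ 2) ^ 2) * (2 * tan x * (1 / cos x ^ 2)) := by
    rw [hcs]; ring
  rw [heq]
  exact h3

lemma g_convex : ConvexOn ℝ (Set.Icc (0:ℝ) (π/8)) (fun x => arctan (tan x ^ 2)) := by
  have hπ : (0:ℝ) < π := pi_pos
  have hsub : ∀ x ∈ Set.Icc (0:ℝ) (π/8), x ∈ Set.Ioo (-(π/2)) (π/2) := by
    intro x hx
    constructor <;> [linarith [hx.1]; linarith [hx.2]]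
  refine (StrictMonoOn.strictConvexOn_of_deriv (convex_Icc _ _) ?_ ?_).convexOn
  · intro x hx
    exact (g_hasDeriv (hsub x hx)).continuousAt.continuousWithinAt
  · rw [interior_Icc]
    intro x hx y hy hxy
    have hx' := hsub x (Set.mem_Icc_of_Ioo hx)
    have hy' := hsub y (Set.mem_Icc_of_Ioo hy)
    rw [(g_hasDeriv hx').deriv, (g_hasDeriv hy').deriv]
    have htx0 : 0 ≤ tan x := tan_nonneg_of_nonneg_of_le_pi_div_two hx.1.le (by linarith [hx'.2])
    have hty0 : 0 ≤ tan y := tan_nonneg_of_nonneg_of_le_pi_div_two hy.1.le (by linarith [hy'.2])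
    have htxy : tan x < tan y := tan_lt_tan_of_nonneg_of_lt_pi_div_two hx.1.le hy'.2 hxy
    have hty1 : tan y ≤ 1 := by
      have : tan y < tan (π/4) := tan_lt_tan_of_nonneg_of_lt_pi_div_two hy.1.le
        (by linarith) (by linarith [hy.2])
      rw [tan_pi_div_four] at this
      linarith
    exact F_strictMono ⟨htx0, by linarith⟩ ⟨hty0, hty1⟩ htxy

lemma key_identity {φ : ℝ} (h1 : 0 < φ) (h2 : φ < π/2) :
    π / 2 - arctan (tan φ ^ 2) = arctan (tan (π/2 - φ) ^ 2) := by
  have ht : 0 < tan φ := tan_pos_of_pos_of_lt_pi_div_two h1 h2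
  rw [tan_pi_div_two_sub, inv_pow, arctan_inv_of_pos (by positivity)]

theorem omega_contraction (φ β : ℝ)
    (hβ : β = (π / 2 - Real.arctan (Real.tan (3 * π / 8) ^ 2)) / (π / 8))
    (hφ : φ ∈ Set.Ioo (3 * π / 8) (π / 2)) :
    π / 2 - Real.arctan (Real.tan φ ^ 2) ≤ β * (π / 2 - φ) ∧ β < 1 := by
  have hπ : (0:ℝ) < π := pi_pos
  have h38 : π/2 - 3*π/8 = π/8 := by ring
  have hβ' : β = arctan (tan (π/8) ^ 2) / (π/8) := by
    rw [hβ, key_identity (by linarith) (by linarith), h38]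
  have hΩ1 : 0 < π/2 - φ := by linarith [hφ.2]
  have hΩ2 : π/2 - φ < π/8 := by linarith [hφ.1]
  have hid : π / 2 - arctan (tan φ ^ 2) = arctan (tan (π/2 - φ) ^ 2) :=
    key_identity (by linarith [hφ.1]) hφ.2
  have hb0 : 0 ≤ (π/2 - φ) / (π/8) := by positivity
  have hb1 : (π/2 - φ) / (π/8) ≤ 1 := by
    rw [div_le_one (by positivity)]; linarith
  have ha0 : 0 ≤ 1 - (π/2 - φ) / (π/8) := by linarith
  have hchord : arctan (tan (π/2 - φ) ^ 2)
      ≤ ((π/2 - φ)/(π/8)) * arctan (tan (π/8) ^ 2) := by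
    have h := g_convex.2 (Set.left_mem_Icc.2 (by positivity))
      (Set.right_mem_Icc.2 (by positivity)) ha0 hb0 (by ring)
    simp only [smul_eq_mul] at h
    have harg : (1 - (π/2 - φ)/(π/8)) * 0 + ((π/2 - φ)/(π/8)) * (π/8) = π/2 - φ := by
      field_simp; ring
    rw [harg] at h
    simpa using h
  have htan8 : 0 < tan (π/8) := tan_pos_of_pos_of_lt_pi_div_two (by positivity) (by linarith)
  have htan8' : tan (π/8) < 1 := by
    have : tan (π/8) < tan (π/4) := tan_lt_tan_of_nonneg_of_lt_pi_div_two (by positivity)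
      (by linarith) (by linarith)
    rwa [tan_pi_div_four] at this
  have harc : arctan (tan (π/8) ^ 2) < π/8 := by
    calc arctan (tan (π/8) ^ 2) < arctan (tan (π/8)) := by
          apply arctan_strictMono; nlinarith
      _ = π/8 := arctan_tan (by linarith) (by linarith)
  constructor
  · rw [hid, hβ']
    calc arctan (tan (π/2 - φ) ^ 2) ≤ ((π/2 - φ)/(π/8)) * arctan (tan (π/8) ^ 2) := hchord
      _ = arctan (tan (π/8) ^ 2) / (π/8) * (π/2 - φ) := by ring
  · rw [hβ', div_lt_one (by positivity)]
    exact harc
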